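/- (Equation (3.12), Theorem 3.3.) In a trans-para-Sasakian manifold the functions α and β are not arbitrary: 2α₀β₀ − dα(ξ) = 0. -/

import Mathlib

/-!
The Jacobi operator `X ↦ R(X, ξ)ξ` is `g`-self-adjoint by the symmetries of the curvature tensor.
The trans-para-Sasakian identity writes it as `(dβ(ξ) - α² - β²) φ² + (dα(ξ) - 2αβ) φ`, where `φ²` is
self-adjoint and `φ` is skew-adjoint, so `(dα(ξ) - 2αβ) φ` must vanish. Since `φ = 0` would force
`V = ℝ ξ`, which is excluded by `dim V = 2n + 1 ≥ 3`, the coefficient vanishes.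
-/

section

variable {V : Type*} [AddCommGroup V] [Module ℝ V]

theorem jacobi_operator_symm {g : LinearMap.BilinForm ℝ V} (R : V →ₗ[ℝ] V →ₗ[ℝ] V →ₗ[ℝ] V)
    (hR_a1 : ∀ X Y Z W : V, g (R X Y Z) W = - g (R Y X Z) W)
    (hR_a2 : ∀ X Y Z W : V, g (R X Y Z) W = - g (R X Y W) Z)
    (hR_pair : ∀ X Y Z W : V, g (R X Y Z) W = g (R Z W X) Y) (Z X W : V) :
    g (R X Z Z) W = g (R W Z Z) X := by
  rw [hR_pair, hR_a2, hR_a1, neg_neg]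

structure IsAlmostParacontactMetric (g : LinearMap.BilinForm ℝ V) (φ : V →ₗ[ℝ] V) (ξ : V)
    (η : V →ₗ[ℝ] ℝ) : Prop where
  phi_xi : φ ξ = 0
  eta_phi : ∀ X, η (φ X) = 0
  eta_xi : η ξ = 1
  phi_phi : ∀ X, φ (φ X) = X - η X • ξ
  metric_phi : ∀ X Y, g (φ X) (φ Y) = -g X Y + η X * η Y

namespace IsAlmostParacontactMetric

variable {g : LinearMap.BilinForm ℝ V} {φ : V →ₗ[ℝ] V} {ξ : V} {η : V →ₗ[ℝ] ℝ}

theorem apply_xi_right (h : IsAlmostParacontactMetric g φ ξ η) (X : V) : g X ξ = η X := by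
  have := h.metric_phi X ξ
  rw [h.phi_xi, h.eta_xi, map_zero] at this
  linarith

theorem apply_phi_left (h : IsAlmostParacontactMetric g φ ξ η) (X Y : V) :
    g (φ X) Y = -g X (φ Y) := by
  have := h.metric_phi X (φ Y)
  rw [h.phi_phi, map_sub, map_smul, h.apply_xi_right] at this
  simpa only [h.eta_phi, smul_zero, mul_zero, sub_zero, add_zero] using this

theorem apply_phi_phi_left (h : IsAlmostParacontactMetric g φ ξ η) (X Y : V) :
    g (φ (φ X)) Y = g X Y - η X * η Y := by
  rw [h.apply_phi_left, h.metric_phi]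
  ring

theorem finrank_le_one_of_phi_eq_zero [FiniteDimensional ℝ V]
    (h : IsAlmostParacontactMetric g φ ξ η) (hφ : φ = 0) : Module.finrank ℝ V ≤ 1 :=
  finrank_le_one ξ fun X => ⟨η X, by
    have := h.phi_phi X
    rw [hφ, LinearMap.zero_apply] at this
    exact (sub_eq_zero.mp this.symm).symm⟩

theorem smul_phi_eq_zero_of_isSelfAdjoint (h : IsAlmostParacontactMetric g φ ξ η)
    (hg_symm : ∀ X Y, g X Y = g Y X) (hg_nondeg : g.Nondegenerate) {k c : ℝ}
    (hS : ∀ X Y, g (k • φ (φ X) + c • φ X) Y = g (k • φ (φ Y) + c • φ Y) X) :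
    c • φ = 0 := by
  ext X
  refine hg_nondeg.1 _ fun Y => ?_
  have hXY := hS X Y
  simp only [map_add, map_smul, LinearMap.add_apply, LinearMap.smul_apply, smul_eq_mul,
    h.apply_phi_phi_left, h.apply_phi_left Y X, hg_symm Y X, hg_symm Y (φ X)] at hXY
  simp only [LinearMap.smul_apply, map_smul, smul_eq_mul]
  linear_combination hXY / 2

theorem jacobi_eq_of_transParaSasakian (h : IsAlmostParacontactMetric g φ ξ η)
    (R : V →ₗ[ℝ] V →ₗ[ℝ] V →ₗ[ℝ] V) (α₀ β₀ : ℝ) (dα dβ : V →ₗ[ℝ] ℝ)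
    (hTPS : ∀ X Y : V, R X Y ξ =
      -((α₀ ^ 2 + β₀ ^ 2) • (η Y • X - η X • Y))
      - (2 * α₀ * β₀) • (η Y • φ X - η X • φ Y)
      - dα X • φ Y + dα Y • φ X + dβ Y • φ (φ X) - dβ X • φ (φ Y)) (X : V) :
    R X ξ ξ = (dβ ξ - (α₀ ^ 2 + β₀ ^ 2)) • φ (φ X) + (dα ξ - 2 * α₀ * β₀) • φ X := by
  rw [hTPS, h.eta_xi, h.phi_xi, map_zero, h.phi_phi X]
  module

end IsAlmostParacontactMetric

end

theorem stmt_3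
    (n : ℕ) (hn : 1 ≤ n)
    (V : Type*) [AddCommGroup V] [Module ℝ V] [FiniteDimensional ℝ V]
    (hdim : Module.finrank ℝ V = 2 * n + 1)
    (g : LinearMap.BilinForm ℝ V)
    (hg_symm : ∀ X Y : V, g X Y = g Y X)
    (hg_nondeg : g.Nondegenerate)
    (φ : V →ₗ[ℝ] V) (ξ : V) (η : V →ₗ[ℝ] ℝ)
    (hφξ : φ ξ = 0) (hηφ : ∀ X : V, η (φ X) = 0)
    (hηξ : η ξ = 1) (hφ2 : ∀ X : V, φ (φ X) = X - η X • ξ)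
    (hgφ : ∀ X Y : V, g (φ X) (φ Y) = - g X Y + η X * η Y)
    (R : V →ₗ[ℝ] V →ₗ[ℝ] V →ₗ[ℝ] V)
    (hR_a1 : ∀ X Y Z W : V, g (R X Y Z) W = - g (R Y X Z) W)
    (hR_a2 : ∀ X Y Z W : V, g (R X Y Z) W = - g (R X Y W) Z)
    (hR_pair : ∀ X Y Z W : V, g (R X Y Z) W = g (R Z W X) Y)
    (α₀ β₀ : ℝ) (dα dβ : V →ₗ[ℝ] ℝ)
    (hTPS : ∀ X Y : V, R X Y ξ =
      -((α₀ ^ 2 + β₀ ^ 2) • (η Y • X - η X • Y))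
      - (2 * α₀ * β₀) • (η Y • φ X - η X • φ Y)
      - dα X • φ Y + dα Y • φ X + dβ Y • φ (φ X) - dβ X • φ (φ Y))
    :
    2 * α₀ * β₀ - dα ξ = 0 := by
  have h : IsAlmostParacontactMetric g φ ξ η := ⟨hφξ, hηφ, hηξ, hφ2, hgφ⟩
  have hjacobi := h.jacobi_eq_of_transParaSasakian R α₀ β₀ dα dβ hTPS
  have hcφ : (dα ξ - 2 * α₀ * β₀) • φ = 0 :=
    h.smul_phi_eq_zero_of_isSelfAdjoint hg_symm hg_nondeg fun X Y => by
      rw [← hjacobi, ← hjacobi]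
      exact jacobi_operator_symm R hR_a1 hR_a2 hR_pair ξ X Y
  by_contra hne
  have hφ : φ = 0 := (smul_eq_zero.mp hcφ).resolve_left fun hc => hne (by linarith)
  have := h.finrank_le_one_of_phi_eq_zero hφ
  omega
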